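/- arXiv:1505.06666 — 5 statements merged into one kernel-verified Lean document; each statement's English description precedes it below -/
import Mathlib

section
/- Let A be an associative unital algebra over a field, q a central unit, e, g ∈ A with e² = e, e·g = g·e, g² = 1 + (q - q⁻¹)·e·g, and suppose q + q⁻¹ ≠ 0. Then for every odd natural number r, g^r = (1 - e)·g + ((q^r + q^{-r})/(q + q^{-1}))·e·g + ((q^{r-1} - q^{-(r-1)})/(q + q^{-1}))·e. -/
/-!
Since `e` commutes with `g`, the generator splits as `g = (1 - e) g + e g` into two pieces with
vanishing products in either order, so `g ^ r = ((1 - e) g) ^ r + (e g) ^ r`. The quadratic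
relation gives `((1 - e) g) ^ 2 = 1 - e`, so odd powers of the first piece return it unchanged,
and `(e g) ^ 2 = (q - q⁻¹) e g + e`: inside the corner `e A e` the element `e g` satisfies
`t ^ 2 = (q - q⁻¹) t + 1`, whose roots are `q` and `-q⁻¹`. Its powers are therefore governed by
the Lucas sequence `(q ^ n - (-q⁻¹) ^ n) / (q + q⁻¹)`, which for odd `n` is the stated coefficient.
-/

section Lucas

variable {K : Type*} [Field K]

theorem ne_zero_of_add_inv_ne_zero {q : K} (hq : q + q⁻¹ ≠ 0) : q ≠ 0 := by
  rintro rfl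
  simp at hq

/-- The Lucas sequence `U_n(q - q⁻¹, -1)`, with characteristic roots `q` and `-q⁻¹`. -/
def lucasU (q : K) (n : ℕ) : K := (q ^ n - (-q⁻¹) ^ n) / (q + q⁻¹)

@[simp]
theorem lucasU_zero (q : K) : lucasU q 0 = 0 := by
  simp [lucasU]

theorem lucasU_one {q : K} (hq : q + q⁻¹ ≠ 0) : lucasU q 1 = 1 := by
  rw [lucasU, pow_one, pow_one, sub_neg_eq_add, div_self hq]

theorem lucasU_add_two {q : K} (hq : q ≠ 0) (n : ℕ) :
    lucasU q (n + 2) = (q - q⁻¹) * lucasU q (n + 1) + lucasU q n := by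
  have hrec : ∀ t : K, t ^ 2 = (q - q⁻¹) * t + 1 →
      t ^ (n + 2) = (q - q⁻¹) * t ^ (n + 1) + t ^ n := fun t ht => by
    rw [pow_add, ht]
    ring
  rw [lucasU, lucasU, lucasU, hrec q (by rw [sub_mul, inv_mul_cancel₀ hq]; ring),
    hrec (-q⁻¹) (by rw [mul_neg, sub_mul, mul_inv_cancel₀ hq]; ring)]
  ring

end Lucas

section Powers

variable {A : Type*}

theorem add_pow_succ_of_mul_eq_zero [Semiring A] {a b : A} (hab : a * b = 0) (hba : b * a = 0)
    (n : ℕ) : (a + b) ^ (n + 1) = a ^ (n + 1) + b ^ (n + 1) := by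
  induction n with
  | zero => simp
  | succ n ih =>
    have hab' : a ^ (n + 1) * b = 0 := by rw [pow_succ, mul_assoc, hab, mul_zero]
    have hba' : b ^ (n + 1) * a = 0 := by rw [pow_succ, mul_assoc, hba, mul_zero]
    rw [pow_succ, ih, add_mul, mul_add, mul_add, hab', hba', add_zero, zero_add, ← pow_succ,
      ← pow_succ]

theorem pow_two_mul_add_one_eq_self [Monoid A] {u : A} (hu : u ^ 3 = u) (k : ℕ) :
    u ^ (2 * k + 1) = u := by
  induction k with
  | zero => simp
  | succ k ih => rw [show 2 * (k + 1) + 1 = 2 * k + 1 + 2 by ring, pow_add, ih, ← pow_succ', hu]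

theorem pow_succ_eq_lucasU {K : Type*} [Field K] [Ring A] [Algebra K A] {q : K} (hq : q + q⁻¹ ≠ 0)
    {e x : A} (hex : e * x = x) (hx : x ^ 2 = (q - q⁻¹) • x + e) (n : ℕ) :
    x ^ (n + 1) = lucasU q (n + 1) • x + lucasU q n • e := by
  induction n with
  | zero => simp [lucasU_one hq]
  | succ n ih =>
    rw [pow_succ, ih, add_mul, smul_mul_assoc, ← pow_two, hx, smul_mul_assoc, hex,
      lucasU_add_two (ne_zero_of_add_inv_ne_zero hq)]
    match_scalars <;> ring

end Powers

section Yokonuma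

variable {K : Type*} [Field K] {A : Type*} [Ring A] [Algebra K A] {q : K} {e g : A}

theorem one_sub_mul_mul_mul_eq_zero (he : IsIdempotentElem e) (heg : Commute e g) :
    (1 - e) * g * (e * g) = 0 := by
  rw [heg.symm.mul_mul_mul_comm, he.one_sub_mul_self, zero_mul]

theorem mul_mul_one_sub_mul_eq_zero (he : IsIdempotentElem e) (heg : Commute e g) :
    e * g * ((1 - e) * g) = 0 := by
  rw [((Commute.one_left g).sub_left heg).symm.mul_mul_mul_comm, he.mul_one_sub_self, zero_mul]

theorem one_sub_mul_pow_three_eq_self (he : IsIdempotentElem e) (heg : Commute e g)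
    (hquad : g ^ 2 = 1 + (q - q⁻¹) • (e * g)) : ((1 - e) * g) ^ 3 = (1 - e) * g := by
  have hsq : ((1 - e) * g) ^ 2 = 1 - e := by
    rw [pow_two, ((Commute.one_left g).sub_left heg).symm.mul_mul_mul_comm, he.one_sub.eq,
      ← pow_two, hquad, mul_add, mul_one, mul_smul_comm, ← mul_assoc, he.one_sub_mul_self,
      zero_mul, smul_zero, add_zero]
  rw [pow_succ, hsq, ← mul_assoc, he.one_sub.eq]

theorem mul_pow_two_eq_smul_add (he : IsIdempotentElem e) (heg : Commute e g)
    (hquad : g ^ 2 = 1 + (q - q⁻¹) • (e * g)) : (e * g) ^ 2 = (q - q⁻¹) • (e * g) + e := by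
  rw [pow_two, heg.symm.mul_mul_mul_comm, he.eq, ← pow_two, hquad, mul_add, mul_one,
    mul_smul_comm, ← mul_assoc, he.eq, add_comm]

end Yokonuma

theorem yokonuma_generator_odd_power_general {K : Type*} [Field K] {A : Type*} [Ring A] [Algebra K A]
    (q : K) (hq2 : q + q⁻¹ ≠ 0)
    (e g : A) (he : e * e = e) (heg : e * g = g * e)
    (hquad : g ^ 2 = 1 + (q - q⁻¹) • (e * g)) :
    ∀ r : ℕ, Odd r →
      g ^ r = (1 - e) * g + ((q ^ r + q⁻¹ ^ r) / (q + q⁻¹)) • (e * g)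
        + ((q ^ r * q⁻¹ - q⁻¹ ^ r * q) / (q + q⁻¹)) • e := by
  rintro r ⟨k, rfl⟩
  have hq := ne_zero_of_add_inv_ne_zero hq2
  have hodd : lucasU q (2 * k + 1) = (q ^ (2 * k + 1) + q⁻¹ ^ (2 * k + 1)) / (q + q⁻¹) := by
    rw [lucasU, Odd.neg_pow (odd_two_mul_add_one k), sub_neg_eq_add]
  have heven : lucasU q (2 * k) = (q ^ (2 * k + 1) * q⁻¹ - q⁻¹ ^ (2 * k + 1) * q) / (q + q⁻¹) := by
    rw [lucasU, Even.neg_pow (even_two_mul k), pow_succ, pow_succ, mul_assoc, mul_assoc,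
      mul_inv_cancel₀ hq, inv_mul_cancel₀ hq, mul_one, mul_one]
  calc g ^ (2 * k + 1) = ((1 - e) * g + e * g) ^ (2 * k + 1) := by
        rw [sub_mul, one_mul, sub_add_cancel]
    _ = ((1 - e) * g) ^ (2 * k + 1) + (e * g) ^ (2 * k + 1) :=
        add_pow_succ_of_mul_eq_zero (one_sub_mul_mul_mul_eq_zero he heg)
          (mul_mul_one_sub_mul_eq_zero he heg) _
    _ = _ := by
        rw [pow_two_mul_add_one_eq_self (one_sub_mul_pow_three_eq_self he heg hquad),
          pow_succ_eq_lucasU hq2 (by rw [← mul_assoc, he]) (mul_pow_two_eq_smul_add he heg hquad), hodd,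
          heven, add_assoc]

/-- Odd-power formula for a Yokonuma–Hecke generator: if `e² = e`, `e·g = g·e`,
`g² = 1 + (q - q⁻¹)·e·g` and `q + q⁻¹ ≠ 0`, then for odd `r`,
`g^r = (1-e)·g + ((q^r + q^{-r})/(q+q⁻¹))·e·g + ((q^{r-1} - q^{-(r-1)})/(q+q⁻¹))·e`. -/
theorem yokonuma_generator_odd_power {K : Type*} [Field K] {A : Type*} [Ring A] [Algebra K A]
    (q : K) (hq : q ≠ 0) (hq2 : q + q⁻¹ ≠ 0)
    (e g : A) (he : e * e = e) (heg : e * g = g * e)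
    (hquad : g ^ 2 = 1 + (q - q⁻¹) • (e * g)) :
    ∀ r : ℕ, Odd r →
      g ^ r = (1 - e) * g + ((q ^ r + q⁻¹ ^ r) / (q + q⁻¹)) • (e * g)
        + ((q ^ r * q⁻¹ - q⁻¹ ^ r * q) / (q + q⁻¹)) • e :=
  yokonuma_generator_odd_power_general q hq2 e g he heg hquad
end

section
/- Let A be an associative unital algebra over a field, q a central unit, e, g ∈ A with e² = e, e·g = g·e, g² = 1 + (q - q⁻¹)·e·g, and suppose q + q⁻¹ ≠ 0. Then for every even natural number r, g^r = (1 - e) + ((q^r - q^{-r})/(q + q^{-1}))·e·g + ((q^{r-1} + q^{-(r-1)})/(q + q^{-1}))·e. -/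
/-! Split `g ^ r = (1 - e) * g ^ r + e * g ^ r`. Since `(1 - e) * g ^ 2 = 1 - e`, the first summand is
`1 - e` for even `r`. In the corner `e A e`, with unit `e`, the element `x = e * g` satisfies
`x ^ 2 = (q - q⁻¹) x + e`, whose characteristic roots are `q` and `-q⁻¹`; so `e * g ^ n = e * x ^ n`
is given by a Binet formula with denominator `q + q⁻¹`, and `(-q⁻¹) ^ r = q⁻¹ ^ r` for even `r`. -/

theorem mul_pow_eq_binet {K A : Type*} [Field K] [Ring A] [Algebra K A] {a b : K} (hab : a ≠ b)
    {e x : A} (hex : e * x = x) (hx : x * x = (a + b) • x - (a * b) • e) (n : ℕ) :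
    e * x ^ n = ((a ^ n - b ^ n) / (a - b)) • x + ((a * b ^ n - b * a ^ n) / (a - b)) • e := by
  have hab' : a - b ≠ 0 := sub_ne_zero.mpr hab
  induction n with
  | zero => simp [div_self hab']
  | succ n ih =>
    rw [pow_succ, ← mul_assoc, ih, add_mul, smul_mul_assoc, smul_mul_assoc, hx, hex]
    match_scalars <;> field_simp <;> ring

theorem mul_pow_eq_self_of_mul_eq_self {M : Type*} [Monoid M] {y a : M} (h : y * a = y) (n : ℕ) :
    y * a ^ n = y := by
  induction n with
  | zero => rw [pow_zero, mul_one]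
  | succ n ih => rw [pow_succ, ← mul_assoc, ih, h]

/-- Even-power formula for a Yokonuma–Hecke generator: if `e² = e`, `e·g = g·e`,
`g² = 1 + (q - q⁻¹)·e·g` and `q + q⁻¹ ≠ 0`, then for even `r`,
`g^r = (1-e) + ((q^r - q^{-r})/(q+q⁻¹))·e·g + ((q^{r-1} + q^{-(r-1)})/(q+q⁻¹))·e`. -/
theorem yokonuma_generator_even_power {K : Type*} [Field K] {A : Type*} [Ring A] [Algebra K A]
    (q : K) (hq : q ≠ 0) (hq2 : q + q⁻¹ ≠ 0)
    (e g : A) (he : e * e = e) (heg : e * g = g * e)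
    (hquad : g ^ 2 = 1 + (q - q⁻¹) • (e * g)) :
    ∀ r : ℕ, Even r →
      g ^ r = (1 - e) + ((q ^ r - q⁻¹ ^ r) / (q + q⁻¹)) • (e * g)
        + ((q ^ r * q⁻¹ + q⁻¹ ^ r * q) / (q + q⁻¹)) • e := by
  rintro r ⟨k, rfl⟩
  have hee : e * (e * g) = e * g := by rw [← mul_assoc, he]
  have hcomplement : (1 - e) * g ^ 2 = 1 - e := by
    rw [hquad, mul_add, mul_one, mul_smul_comm, sub_mul, one_mul, hee, sub_self, smul_zero, add_zero]
  have hcorner : (e * g) * (e * g) = (q + -q⁻¹) • (e * g) - (q * -q⁻¹) • e := by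
    calc (e * g) * (e * g) = e * e * (g * g) := by rw [mul_assoc, ← mul_assoc g, ← heg]; noncomm_ring
      _ = e + (q - q⁻¹) • (e * g) := by rw [he, ← sq, hquad, mul_add, mul_one, mul_smul_comm, hee]
      _ = _ := by rw [mul_neg, mul_inv_cancel₀ hq]; match_scalars <;> ring
  have hcommute : e * g ^ (k + k) = e * (e * g) ^ (k + k) := by
    rw [(show Commute e g from heg).mul_pow, ← mul_assoc, ← pow_succ',
      IsIdempotentElem.pow_succ_eq _ he]
  have hbinet := mul_pow_eq_binet (fun h => hq2 (by linear_combination h)) hee hcorner (k + k)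
  calc g ^ (k + k) = (1 - e) * (g ^ 2) ^ k + e * g ^ (k + k) := by
        rw [← pow_mul, two_mul, sub_mul, one_mul, sub_add_cancel]
    _ = _ := by
        rw [mul_pow_eq_self_of_mul_eq_self hcomplement, hcommute, hbinet, ← two_mul,
          (even_two_mul k).neg_pow, sub_neg_eq_add, add_assoc]
        match_scalars <;> ring
end

section
/- Let A be an associative unital ring, q a central unit, and let e, g ∈ A satisfy e² = e, e·g = g·e, and g² = 1 + (q - q⁻¹)·e·g. Define g̃ := g + (q - 1)·e·g and u := q². Then g̃² = 1 + (u - 1)·e + (u - 1)·e·g̃. -/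
/-!
Put `x := e·g`. Because `e` is an idempotent commuting with `g`, each of `g·x`, `x·g` and `x·x`
equals `e·g²`, so for `g̃ = g + (q-1)·x` the cross terms collapse and
`g̃² = g² + ((q-1)² + 2(q-1))·e·g² = g² + (u-1)·e·g²`; likewise `e·g̃ = q·x`.
Substituting `g² = 1 + (q - q⁻¹)·x` leaves the scalar identity `q²·(q - q⁻¹) = (u-1)·q`.
-/

section

variable {A : Type*} [Ring A]

theorem commute_of_mul_eq_one_of_forall_commute {q qi : A} (hq : q * qi = 1)
    (hqc : ∀ a, Commute q a) (a : A) :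
    Commute qi a :=
  let u : Aˣ := ⟨q, qi, hq, (hqc qi).eq ▸ hq⟩
  (hqc a).units_inv_left (u := u)

theorem sq_mul_sub_eq_sq_sub_one_mul {q qi : A} (hq : q * qi = 1) :
    q ^ 2 * (q - qi) = (q ^ 2 - 1) * q := by
  rw [mul_sub, sq, mul_assoc q q qi, hq, mul_one]
  noncomm_ring

theorem idem_mul_add_sub_one_mul_idem_mul {q e : A} (g : A) (hqc : ∀ a, Commute q a)
    (he : IsIdempotentElem e) :
    e * (g + (q - 1) * (e * g)) = q * (e * g) := by
  rw [mul_add, ((hqc e).sub_left (Commute.one_left e)).symm.left_comm, ← mul_assoc e e g, he.eq]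
  noncomm_ring

theorem add_sub_one_mul_idem_mul_sq {q e g : A} (hqc : ∀ a, Commute q a)
    (he : IsIdempotentElem e) (heg : Commute e g) :
    (g + (q - 1) * (e * g)) ^ 2 = g ^ 2 + (q ^ 2 - 1) * (e * g ^ 2) := by
  have hc : ∀ a, Commute (q - 1) a := fun a => (hqc a).sub_left (Commute.one_left a)
  have hgx : g * (e * g) = e * g ^ 2 := by rw [← mul_assoc, ← heg.eq, mul_assoc, sq]
  have hxg : e * g * g = e * g ^ 2 := by rw [mul_assoc, sq]
  have hxx : e * g * (e * g) = e * g ^ 2 := by rw [mul_assoc, hgx, ← mul_assoc, he.eq]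
  calc (g + (q - 1) * (e * g)) ^ 2
      = g ^ 2 + (q - 1) * (g * (e * g)) + (q - 1) * (e * g * g)
          + (q - 1) * (q - 1) * (e * g * (e * g)) := by
        rw [sq, add_mul, mul_add, mul_add, (hc g).symm.left_comm,
          mul_assoc (q - 1) (e * g) ((q - 1) * (e * g)), (hc (e * g)).symm.left_comm]
        noncomm_ring
    _ = g ^ 2 + (q ^ 2 - 1) * (e * g ^ 2) := by
        rw [hgx, hxg, hxx]
        noncomm_ring

end

theorem new_to_old_quadratic_general {A : Type*} [Ring A]
    (q qi e g : A)
    (hq : q * qi = 1)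
    (hqc : ∀ a : A, q * a = a * q)
    (he : e * e = e) (heg : e * g = g * e)
    (hquad : g ^ 2 = 1 + (q - qi) * (e * g)) :
    (g + (q - 1) * (e * g)) ^ 2
      = 1 + (q ^ 2 - 1) * e + (q ^ 2 - 1) * (e * (g + (q - 1) * (e * g))) := by
  have hd : Commute (q - qi) e :=
    Commute.sub_left (hqc e) (commute_of_mul_eq_one_of_forall_commute hq hqc e)
  have heg2 : e * g ^ 2 = e + (q - qi) * (e * g) := by
    rw [hquad, mul_add, mul_one, hd.symm.left_comm, ← mul_assoc e e g, he]
  rw [add_sub_one_mul_idem_mul_sq hqc he heg, idem_mul_add_sub_one_mul_idem_mul g hqc he, heg2,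
    hquad, ← mul_assoc (q ^ 2 - 1) q, ← sq_mul_sub_eq_sq_sub_one_mul hq]
  noncomm_ring

/-- Change of presentation of the Yokonuma–Hecke algebra: if `g² = 1 + (q - q⁻¹)·e·g`,
then `g̃ := g + (q-1)·e·g` satisfies the old quadratic relation
`g̃² = 1 + (u-1)·e + (u-1)·e·g̃` with `u = q²`. -/
theorem new_to_old_quadratic {A : Type*} [Ring A]
    (q qi e g : A)
    (hq : q * qi = 1) (hq' : qi * q = 1)
    (hqc : ∀ a : A, q * a = a * q) (hqic : ∀ a : A, qi * a = a * qi)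
    (he : e * e = e) (heg : e * g = g * e)
    (hquad : g ^ 2 = 1 + (q - qi) * (e * g)) :
    (g + (q - 1) * (e * g)) ^ 2
      = 1 + (q ^ 2 - 1) * e + (q ^ 2 - 1) * (e * (g + (q - 1) * (e * g))) :=
  new_to_old_quadratic_general q qi e g hq hqc he heg hquad
end

section
/- Let d be a positive natural number and G = ZMod d × ZMod d × ZMod d with generators t₁ = (1,0,0), t₂ = (0,1,0), t₃ = (0,0,1) in ℂ[G]. Define e_{i,k} := (1/d)·∑_{s=0}^{d-1} tᵢ^s·t_k^{d-s} for i < k. Then e_{1,3}·e_{2,3} = e_{1,2}·e_{2,3}. -/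
open Finset

/-- Factoring one `b` out of each summand reduces this to
`(a - b) · ∑_{s<n} a^s b^{n-1-s} = a^n - b^n`. -/
theorem mul_sum_range_pow_mul_pow_sub_eq_of_pow_eq {R : Type*} [CommRing R] {a b : R} {n : ℕ}
    (h : a ^ n = b ^ n) :
    a * ∑ s ∈ range n, a ^ s * b ^ (n - s) = b * ∑ s ∈ range n, a ^ s * b ^ (n - s) := by
  have factor_b : ∑ s ∈ range n, a ^ s * b ^ (n - s) =
      b * ∑ s ∈ range n, a ^ s * b ^ (n - 1 - s) := by
    rw [mul_sum]
    refine sum_congr rfl fun s hs => ?_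
    have : n - s = n - 1 - s + 1 := by have := mem_range.mp hs; omega
    rw [this, pow_succ]
    ring
  rw [factor_b]
  linear_combination b * geom_sum₂_mul a b n + b * h

theorem pow_mul_eq_pow_mul_of_mul_eq_mul {M : Type*} [CommMonoid M] {a b x : M}
    (h : a * x = b * x) (n : ℕ) : a ^ n * x = b ^ n * x := by
  induction n with
  | zero => simp
  | succ n ih =>
    calc a ^ (n + 1) * x = a * (a ^ n * x) := by rw [pow_succ']; ac_rfl
      _ = b ^ n * (a * x) := by rw [ih]; ac_rfl
      _ = b ^ (n + 1) * x := by rw [h, pow_succ]; ac_rfl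

theorem AddMonoidAlgebra.single_one_pow_eq_one {k G : Type*} [CommSemiring k] [AddMonoid G]
    {g : G} {n : ℕ} (h : n • g = 0) : single g (1 : k) ^ n = 1 := by
  rw [single_pow, h, one_pow, one_def]

theorem eik_product_relation_general (d : ℕ)
    (t₁ t₂ t₃ : AddMonoidAlgebra ℂ (ZMod d × ZMod d × ZMod d))
    (ht₂ : t₂ = AddMonoidAlgebra.single ((0 : ZMod d), (1 : ZMod d), (0 : ZMod d)) 1)
    (ht₃ : t₃ = AddMonoidAlgebra.single ((0 : ZMod d), (0 : ZMod d), (1 : ZMod d)) 1)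
    (e₁₂ e₁₃ e₂₃ : AddMonoidAlgebra ℂ (ZMod d × ZMod d × ZMod d))
    (he₁₂ : e₁₂ = (1 / (d : ℂ)) • ∑ s ∈ Finset.range d, t₁ ^ s * t₂ ^ (d - s))
    (he₁₃ : e₁₃ = (1 / (d : ℂ)) • ∑ s ∈ Finset.range d, t₁ ^ s * t₃ ^ (d - s))
    (he₂₃ : e₂₃ = (1 / (d : ℂ)) • ∑ s ∈ Finset.range d, t₂ ^ s * t₃ ^ (d - s)) :
    e₁₃ * e₂₃ = e₁₂ * e₂₃ := by
  have t₂_pow_d : t₂ ^ d = 1 :=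
    ht₂ ▸ AddMonoidAlgebra.single_one_pow_eq_one (ZModModule.char_nsmul_eq_zero d _)
  have t₃_pow_d : t₃ ^ d = 1 :=
    ht₃ ▸ AddMonoidAlgebra.single_one_pow_eq_one (ZModModule.char_nsmul_eq_zero d _)
  have absorb : t₂ * e₂₃ = t₃ * e₂₃ := by
    rw [he₂₃, mul_smul_comm, mul_smul_comm,
      mul_sum_range_pow_mul_pow_sub_eq_of_pow_eq (t₂_pow_d.trans t₃_pow_d.symm)]
  rw [he₁₂, he₁₃, smul_mul_assoc, smul_mul_assoc, sum_mul, sum_mul]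
  congr 1
  refine sum_congr rfl fun s _ => ?_
  rw [mul_assoc, mul_assoc, pow_mul_eq_pow_mul_of_mul_eq_mul absorb]

/-- In the group algebra `ℂ[(ℤ/dℤ)³]`, with
`e_{i,k} = (1/d)·∑_{s=0}^{d-1} tᵢ^s·t_k^{d-s}`, one has `e_{1,3}·e_{2,3} = e_{1,2}·e_{2,3}`. -/
theorem eik_product_relation (d : ℕ) (hd : 0 < d)
    (t₁ t₂ t₃ : AddMonoidAlgebra ℂ (ZMod d × ZMod d × ZMod d))
    (ht₁ : t₁ = AddMonoidAlgebra.single ((1 : ZMod d), (0 : ZMod d), (0 : ZMod d)) 1)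
    (ht₂ : t₂ = AddMonoidAlgebra.single ((0 : ZMod d), (1 : ZMod d), (0 : ZMod d)) 1)
    (ht₃ : t₃ = AddMonoidAlgebra.single ((0 : ZMod d), (0 : ZMod d), (1 : ZMod d)) 1)
    (e₁₂ e₁₃ e₂₃ : AddMonoidAlgebra ℂ (ZMod d × ZMod d × ZMod d))
    (he₁₂ : e₁₂ = (1 / (d : ℂ)) • ∑ s ∈ Finset.range d, t₁ ^ s * t₂ ^ (d - s))
    (he₁₃ : e₁₃ = (1 / (d : ℂ)) • ∑ s ∈ Finset.range d, t₁ ^ s * t₃ ^ (d - s))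
    (he₂₃ : e₂₃ = (1 / (d : ℂ)) • ∑ s ∈ Finset.range d, t₂ ^ s * t₃ ^ (d - s)) :
    e₁₃ * e₂₃ = e₁₂ * e₂₃ :=
  eik_product_relation_general d t₁ t₂ t₃ ht₂ ht₃ e₁₂ e₁₃ e₂₃ he₁₂ he₁₃ he₂₃
end

section
/- Let d ≥ 1, let ω := exp(2πi/d) ∈ ℂ, and let D be a nonempty subset of ℤ/dℤ. Define x_k := (1/|D|)·∑_{a ∈ D} ω^{a·k} for k ∈ ℤ/dℤ. Then x₀ = 1 and the x_k satisfy the E-system: for all k ∈ {1, …, d-1}, ∑_{s=0}^{d-1} x_{k+s}·x_{d-s} = x_k·∑_{s=0}^{d-1} x_s·x_{d-s}, subscripts modulo d. -/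
/-!
Writing `ψ` for the standard character `j ↦ exp (2πij/d)` of `ℤ/dℤ`, `x` is `1/|D|` times
`k ↦ ∑_{a ∈ D} ψ(ak)`. In `∑_t x(k+t) x(-t)` the product of the two sums over `D` is a double
sum over `(a, b)`, and orthogonality `∑_t ψ((a-b)t) = d·[a = b]` keeps only its diagonal, so
`∑_t x(k+t) x(-t) = (d/|D|) x_k` for every `k`. At `k = 0` this evaluates the sum on the right
of the E-system to `d/|D|`, since `x_0 = 1`.
-/

open Finset

namespace AddChar

variable {R K : Type*} [CommRing R] [Fintype R] [DecidableEq R] [CommRing K] [IsDomain K]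
  {ψ : AddChar R K}

theorem sum_apply_mul_add_mul_apply_mul_neg (hψ : ψ.IsPrimitive) (a b k : R) :
    ∑ t, ψ (a * (k + t)) * ψ (b * -t) = if a = b then Fintype.card R * ψ (a * k) else 0 := by
  have hsplit : ∀ t, ψ (a * (k + t)) * ψ (b * -t) = ψ (a * k) * ψ (t * (a - b)) := fun t => by
    rw [← map_add_eq_mul, ← map_add_eq_mul]
    ring_nf
  simp_rw [hsplit, ← mul_sum, sum_mulShift _ hψ, sub_eq_zero]
  split_ifs <;> ring

theorem sum_mul_neg_of_forall_eq_mul_sum (hψ : ψ.IsPrimitive) (D : Finset R) (c : K)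
    {x : R → K} (hx : ∀ k, x k = c * ∑ a ∈ D, ψ (a * k)) (k : R) :
    ∑ t, x (k + t) * x (-t) = c * Fintype.card R * x k := by
  have hdiag : ∀ a ∈ D,
      ∑ t, ∑ b ∈ D, ψ (a * (k + t)) * ψ (b * -t) = Fintype.card R * ψ (a * k) := by
    intro a ha
    rw [sum_comm, sum_congr rfl fun b _ => sum_apply_mul_add_mul_apply_mul_neg hψ a b k,
      sum_ite_eq, if_pos ha]
  simp_rw [hx, mul_mul_mul_comm, ← mul_sum, sum_mul_sum]
  rw [sum_comm, sum_congr rfl hdiag, ← mul_sum]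

end AddChar

theorem ZMod.sum_range_natCast {M : Type*} [AddCommMonoid M] (d : ℕ) [NeZero d]
    (g : ZMod d → M) : ∑ s ∈ range d, g s = ∑ t, g t :=
  sum_nbij' Nat.cast ZMod.val (by simp) (by simp [ZMod.val_lt])
    (fun _ hs => ZMod.val_cast_of_lt (mem_range.mp hs)) (fun t _ => ZMod.natCast_zmod_val t)
    (fun _ _ => rfl)

theorem ZMod.stdAddChar_mul_eq_pow {d : ℕ} [NeZero d] (a k : ZMod d) :
    ZMod.stdAddChar (a * k) = Complex.exp (2 * Real.pi * Complex.I / d) ^ (a.val * k.val) := by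
  have hcast : a * k = ((a.val * k.val : ℕ) : ZMod d) := by simp
  rw [hcast, ZMod.stdAddChar_apply, ZMod.toCircle_natCast, ← Complex.exp_nat_mul]
  push_cast
  ring_nf

/-- Gérardin solutions of the E-system: with `ω = exp(2πi/d)`, a nonempty `D ⊆ ℤ/dℤ` and
`x_k = (1/|D|)·∑_{a ∈ D} ω^{a·k}`, one has `x₀ = 1` and the E-system holds. -/
theorem gerardin_solution_E_system (d : ℕ) (hd : 1 ≤ d)
    (D : Finset (ZMod d)) (hD : D.Nonempty)
    (ω : ℂ) (hω : ω = Complex.exp (2 * Real.pi * Complex.I / d))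
    (x : ZMod d → ℂ)
    (hx : ∀ k : ZMod d, x k = (1 / (D.card : ℂ)) * ∑ a ∈ D, ω ^ (a.val * k.val)) :
    x 0 = 1 ∧
      ∀ k : ZMod d, k ≠ 0 →
        ∑ s ∈ Finset.range d, x (k + (s : ZMod d)) * x ((d : ZMod d) - (s : ZMod d))
          = x k * ∑ s ∈ Finset.range d, x ((s : ZMod d)) * x ((d : ZMod d) - (s : ZMod d)) := by
  have : NeZero d := ⟨by omega⟩
  have hcard : (D.card : ℂ) ≠ 0 := Nat.cast_ne_zero.mpr hD.card_pos.ne'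
  have hxψ : ∀ k, x k = (1 / (D.card : ℂ)) * ∑ a ∈ D, ZMod.stdAddChar (a * k) := by
    simpa only [hω, ZMod.stdAddChar_mul_eq_pow] using hx
  have hcorr (k : ZMod d) :
      ∑ s ∈ range d, x (k + (s : ZMod d)) * x ((d : ZMod d) - (s : ZMod d))
        = 1 / (D.card : ℂ) * d * x k := by
    simp only [ZMod.natCast_self, zero_sub]
    rw [ZMod.sum_range_natCast d fun t => x (k + t) * x (-t),
      AddChar.sum_mul_neg_of_forall_eq_mul_sum (ZMod.isPrimitive_stdAddChar d) D _ hxψ, ZMod.card]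
  have hx0 : x 0 = 1 := by
    simp [hxψ, hcard]
  have hcorr0 := hcorr 0
  simp only [zero_add, hx0, mul_one] at hcorr0
  exact ⟨hx0, fun k _ => by rw [hcorr k, hcorr0, mul_comm]⟩
end
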